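/- arXiv:1911.00186 — 3 statements merged into one kernel-verified Lean document; each statement's English description precedes it below -/
import Mathlib

section
/- For every real x > 0, ln(1+x) = ∑_{n=0}^{∞} (-1)^n c_n x^{n+1} / ((1+x)(1+2x)⋯(1+nx)), where the denominator for n = 0 is the empty product 1. -/
/-!
With `W_n(t) = ∏_{k<n} x (k - t) / (1 + k x)`, the recursion `W_{n+1} = W_n · x (n - t) / (1 + n x)`
makes `x / (1 + t x) = ∑_{n<N} x W_n / (1 + n x) + x W_N / (1 + t x)` a telescoping identity.
As `W_n(t) = (-1)^n x^n (t)_n / ∏_{k<n} (1 + k x)`, integrating it over `[0, 1]` writes `log (1 + x)`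
as the `N`-th partial sum plus a remainder, which is at most `x² ∏_{k=1}^{N-1} k x / (1 + k x)` and
so tends to `0` because the harmonic series diverges. Convergent partial sums give summability
because all terms after the first are nonpositive (`W_{n+1} ≤ 0` on `[0, 1]`).
-/

open scoped BigOperators

noncomputable def cauchyC (n : ℕ) : ℝ :=
  ∫ x in (0:ℝ)..1, ∏ i ∈ Finset.range n, (x - i)

open Finset Filter Topology

theorem one_add_sum_le_prod_one_add {ι R : Type*} [CommSemiring R] [PartialOrder R]
    [IsOrderedRing R] (s : Finset ι) {u : ι → R} (hu : ∀ i ∈ s, 0 ≤ u i) :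
    1 + ∑ i ∈ s, u i ≤ ∏ i ∈ s, (1 + u i) := by
  classical
  induction s using Finset.induction_on with
  | empty => simp
  | insert a s ha ih =>
    rw [sum_insert ha, prod_insert ha]
    have hs := ih fun i hi => hu i (mem_insert_of_mem hi)
    have hsum : 0 ≤ ∑ i ∈ s, u i := sum_nonneg fun i hi => hu i (mem_insert_of_mem hi)
    have ha0 := hu a (mem_insert_self a s)
    calc 1 + (u a + ∑ i ∈ s, u i) ≤ 1 + (u a + ∑ i ∈ s, u i) + u a * ∑ i ∈ s, u i :=
          le_add_of_nonneg_right (mul_nonneg ha0 hsum)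
      _ = (1 + u a) * (1 + ∑ i ∈ s, u i) := by ring
      _ ≤ (1 + u a) * ∏ i ∈ s, (1 + u i) :=
          mul_le_mul_of_nonneg_left hs (add_nonneg zero_le_one ha0)

theorem tendsto_prod_range_one_add_atTop {u : ℕ → ℝ} (hu : ∀ i, 0 ≤ u i)
    (h : Tendsto (fun n => ∑ i ∈ range n, u i) atTop atTop) :
    Tendsto (fun n => ∏ i ∈ range n, (1 + u i)) atTop atTop :=
  tendsto_atTop_mono (fun _ => one_add_sum_le_prod_one_add _ fun i _ => hu i)
    (tendsto_atTop_add_const_left _ 1 h)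

theorem hasSum_of_tendsto_sum_range_of_tail_nonpos {f : ℕ → ℝ} {a : ℝ}
    (hf : ∀ n, f (n + 1) ≤ 0) (h : Tendsto (fun n => ∑ i ∈ range n, f i) atTop (𝓝 a)) :
    HasSum f a := by
  rw [← hasSum_nat_add_iff' 1]
  have htail : HasSum (fun n => -f (n + 1)) (f 0 - a) := by
    refine (hasSum_iff_tendsto_nat_of_nonneg (fun n => neg_nonneg.2 (hf n)) _).2 ?_
    refine (((tendsto_add_atTop_iff_nat 1).2 h).const_sub (f 0)).congr fun n => ?_
    rw [sum_range_succ', sum_neg_distrib]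
    ring
  simpa using htail.neg

section Field

variable {K : Type*} [Field K]

def cauchyWeight (x t : K) (n : ℕ) : K :=
  ∏ k ∈ range n, x * (k - t) / (1 + k * x)

theorem cauchyWeight_succ (x t : K) (n : ℕ) :
    cauchyWeight x t (n + 1) = cauchyWeight x t n * (x * (n - t) / (1 + n * x)) :=
  prod_range_succ _ n

theorem sum_range_div_mul_cauchyWeight {x t : K} (ht : 1 + t * x ≠ 0)
    (hx : ∀ k : ℕ, 1 + k * x ≠ 0) (N : ℕ) :
    ∑ n ∈ range N, x / (1 + n * x) * cauchyWeight x t n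
      = x / (1 + t * x) - x / (1 + t * x) * cauchyWeight x t N := by
  have hstep : ∀ n, x / (1 + t * x) * cauchyWeight x t n
      - x / (1 + t * x) * cauchyWeight x t (n + 1) = x / (1 + n * x) * cauchyWeight x t n := by
    intro n
    rw [cauchyWeight_succ]
    have hn : 1 + x * n ≠ 0 := by rw [mul_comm]; exact hx n
    have ht' : 1 + x * t ≠ 0 := by rwa [mul_comm]
    field_simp
    ring
  simp only [← hstep]
  rw [sum_range_sub']
  simp [cauchyWeight]

theorem cauchyWeight_eq (x t : K) (n : ℕ) :
    cauchyWeight x t n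
      = (-1) ^ n * x ^ n / (∏ k ∈ range n, (1 + k * x)) * ∏ k ∈ range n, (t - k) := by
  have hfactor : ∀ k ∈ range n, x * (k - t) / (1 + k * x) = -x / (1 + k * x) * (t - k) :=
    fun k _ => by ring
  rw [cauchyWeight, prod_congr rfl hfactor, prod_mul_distrib, prod_div_distrib, prod_const,
    card_range, neg_pow]

theorem cauchyWeight_succ' (x t : K) (n : ℕ) :
    cauchyWeight x t (n + 1)
      = (∏ i ∈ range n, x * (i + 1 - t) / (1 + (i + 1) * x)) * -(x * t) := by
  rw [cauchyWeight, prod_range_succ']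
  push_cast
  ring

end Field

section Real

open Real intervalIntegral

theorem integral_div_one_add_mul {x : ℝ} (hx : -1 < x) :
    ∫ t in (0:ℝ)..1, x / (1 + t * x) = log (1 + x) := by
  rcases eq_or_ne x 0 with rfl | hx0
  · simp
  have hcomp := integral_comp_mul_add (a := 0) (b := 1) (fun u : ℝ => u⁻¹) hx0 1
  simp only [mul_zero, zero_add, mul_one] at hcomp
  have hintegrand : (fun t => x / (1 + t * x)) = fun t => x * (x * t + 1)⁻¹ := by
    funext t
    ring
  rw [hintegrand, integral_const_mul, hcomp, integral_inv_of_pos one_pos (by linarith), div_one,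
    smul_eq_mul, ← mul_assoc, mul_inv_cancel₀ hx0, one_mul, add_comm]

theorem continuous_cauchyWeight (x : ℝ) (n : ℕ) : Continuous fun t => cauchyWeight x t n := by
  unfold cauchyWeight
  fun_prop

theorem integral_cauchyWeight (x : ℝ) (n : ℕ) :
    ∫ t in (0:ℝ)..1, cauchyWeight x t n
      = (-1) ^ n * x ^ n / (∏ k ∈ range n, (1 + k * x)) * cauchyC n := by
  simp_rw [cauchyWeight_eq, integral_const_mul]
  rfl

theorem div_one_add_mul_integral_cauchyWeight (x : ℝ) (n : ℕ) :
    x / (1 + n * x) * ∫ t in (0:ℝ)..1, cauchyWeight x t n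
      = (-1) ^ n * cauchyC n * x ^ (n + 1) / ∏ i ∈ range n, (1 + (i + 1 : ℝ) * x) := by
  have hprod : ∏ i ∈ range n, (1 + (i + 1 : ℝ) * x)
      = (∏ k ∈ range n, (1 + k * x)) * (1 + n * x) := by
    have h := (prod_range_succ' (fun k : ℕ => 1 + (k : ℝ) * x) n).symm.trans
      (prod_range_succ _ n)
    simpa using h
  rw [integral_cauchyWeight, hprod, ← div_div]
  ring

theorem log_one_add_eq_sum_range_add_integral {x : ℝ} (hx : 0 ≤ x) (N : ℕ) :
    log (1 + x) = ∑ n ∈ range N, (-1) ^ n * cauchyC n * x ^ (n + 1)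
        / ∏ i ∈ range n, (1 + (i + 1 : ℝ) * x)
      + ∫ t in (0:ℝ)..1, x / (1 + t * x) * cauchyWeight x t N := by
  have hpos : ∀ t ∈ Set.uIcc (0:ℝ) 1, 0 < 1 + t * x := by
    intro t ht
    rw [Set.uIcc_of_le zero_le_one] at ht
    nlinarith [ht.1]
  have hident : Set.EqOn (fun t => x / (1 + t * x))
      (fun t => ∑ n ∈ range N, x / (1 + n * x) * cauchyWeight x t n
        + x / (1 + t * x) * cauchyWeight x t N) (Set.uIcc 0 1) := by
    intro t ht
    dsimp only
    rw [sum_range_div_mul_cauchyWeight (hpos t ht).ne' (fun k => by positivity)]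
    ring
  have hterm : ∀ n ∈ range N, IntervalIntegrable
      (fun t => x / (1 + n * x) * cauchyWeight x t n) MeasureTheory.volume 0 1 :=
    fun n _ => ((continuous_cauchyWeight x n).intervalIntegrable 0 1).const_mul _
  have hsum : IntervalIntegrable (fun t => ∑ n ∈ range N, x / (1 + n * x) * cauchyWeight x t n)
      MeasureTheory.volume 0 1 :=
    (continuous_finsetSum _ fun n _ =>
      continuous_const.mul (continuous_cauchyWeight x n)).intervalIntegrable 0 1
  have hrem : IntervalIntegrable (fun t => x / (1 + t * x) * cauchyWeight x t N)
      MeasureTheory.volume 0 1 := by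
    refine ContinuousOn.intervalIntegrable
      (ContinuousOn.mul ?_ (continuous_cauchyWeight x N).continuousOn)
    exact continuousOn_const.div (by fun_prop) fun t ht => (hpos t ht).ne'
  rw [← integral_div_one_add_mul (by linarith), integral_congr hident,
    integral_add hsum hrem, integral_finsetSum hterm]
  simp_rw [integral_const_mul, div_one_add_mul_integral_cauchyWeight]

theorem cauchyWeight_succ_nonpos {x t : ℝ} (hx : 0 ≤ x) (ht₀ : 0 ≤ t) (ht₁ : t ≤ 1)
    (n : ℕ) :
    cauchyWeight x t (n + 1) ≤ 0 := by
  rw [cauchyWeight_succ']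
  refine mul_nonpos_of_nonneg_of_nonpos (prod_nonneg fun i _ => ?_)
    (neg_nonpos.2 (mul_nonneg hx ht₀))
  have : (0:ℝ) ≤ i := i.cast_nonneg
  exact div_nonneg (mul_nonneg hx (by linarith)) (by positivity)

theorem abs_cauchyWeight_succ_le {x t : ℝ} (hx : 0 ≤ x) (ht₀ : 0 ≤ t) (ht₁ : t ≤ 1)
    (n : ℕ) :
    |cauchyWeight x t (n + 1)| ≤ x * ∏ i ∈ range n, (i + 1) * x / (1 + (i + 1) * x) := by
  rw [cauchyWeight_succ', abs_mul, abs_prod, abs_neg, abs_of_nonneg (mul_nonneg hx ht₀),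
    mul_comm x (∏ i ∈ range n, _)]
  refine mul_le_mul (prod_le_prod (fun i _ => abs_nonneg _) fun i _ => ?_)
    (mul_le_of_le_one_right hx ht₁) (mul_nonneg hx ht₀) (prod_nonneg fun i _ => by positivity)
  have : (0:ℝ) ≤ i := i.cast_nonneg
  rw [abs_of_nonneg (div_nonneg (mul_nonneg hx (by linarith)) (by positivity))]
  exact div_le_div_of_nonneg_right (by nlinarith) (by positivity)

theorem tendsto_prod_range_div_one_add {x : ℝ} (hx : 0 < x) :
    Tendsto (fun n => ∏ i ∈ range n, (i + 1) * x / (1 + (i + 1) * x)) atTop (𝓝 0) := by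
  have hharmonic : Tendsto (fun n => ∑ i ∈ range n, 1 / ((i + 1) * x)) atTop atTop := by
    refine (tendsto_sum_range_one_div_nat_succ_atTop.atTop_div_const hx).congr fun n => ?_
    rw [sum_div]
    exact sum_congr rfl fun i _ => div_div _ _ _
  have hprod := tendsto_prod_range_one_add_atTop (fun i => by positivity) hharmonic
  refine hprod.inv_tendsto_atTop.congr fun n => ?_
  rw [Pi.inv_apply, ← prod_inv_distrib]
  refine prod_congr rfl fun i _ => ?_
  field_simp
  ring

theorem tendsto_integral_div_one_add_mul_cauchyWeight {x : ℝ} (hx : 0 < x) :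
    Tendsto (fun N => ∫ t in (0:ℝ)..1, x / (1 + t * x) * cauchyWeight x t N) atTop (𝓝 0) := by
  rw [← tendsto_add_atTop_iff_nat 1]
  have hbound := (tendsto_prod_range_div_one_add hx).const_mul (x ^ 2)
  rw [mul_zero] at hbound
  refine squeeze_zero_norm (fun n => ?_) hbound
  have hpointwise : ∀ t ∈ Set.uIoc (0:ℝ) 1, ‖x / (1 + t * x) * cauchyWeight x t (n + 1)‖
      ≤ x ^ 2 * ∏ i ∈ range n, (i + 1) * x / (1 + (i + 1) * x) := by
    intro t ht
    rw [Set.uIoc_of_le zero_le_one] at ht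
    have hden : 1 ≤ 1 + t * x := le_add_of_nonneg_right (mul_nonneg ht.1.le hx.le)
    rw [norm_mul, Real.norm_of_nonneg (div_nonneg hx.le (by linarith)), Real.norm_eq_abs, sq,
      mul_assoc]
    exact mul_le_mul (div_le_self hx.le hden) (abs_cauchyWeight_succ_le hx.le ht.1.le ht.2 n)
      (abs_nonneg _) hx.le
  simpa using norm_integral_le_of_norm_le_const hpointwise

theorem cauchy_summand_succ_nonpos {x : ℝ} (hx : 0 ≤ x) (n : ℕ) :
    (-1) ^ (n + 1) * cauchyC (n + 1) * x ^ (n + 1 + 1)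
      / ∏ i ∈ range (n + 1), (1 + (i + 1 : ℝ) * x) ≤ 0 := by
  rw [← div_one_add_mul_integral_cauchyWeight]
  have h := integral_nonneg (μ := MeasureTheory.volume) zero_le_one fun t ht =>
    neg_nonneg.2 (cauchyWeight_succ_nonpos hx ht.1 ht.2 n)
  rw [integral_neg, neg_nonneg] at h
  exact mul_nonpos_of_nonneg_of_nonpos (by positivity) h

end Real

theorem log_one_add_eq_cauchy_series (x : ℝ) (hx : 0 < x) :
    Real.log (1 + x) = ∑' n : ℕ,
      (-1) ^ n * cauchyC n * x ^ (n + 1) / ∏ i ∈ Finset.range n, (1 + (i + 1 : ℝ) * x) := by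
  refine (hasSum_of_tendsto_sum_range_of_tail_nonpos
    (cauchy_summand_succ_nonpos hx.le) ?_).tsum_eq.symm
  have h := (tendsto_integral_div_one_add_mul_cauchyWeight hx).const_sub (Real.log (1 + x))
  rw [sub_zero] at h
  refine h.congr fun N => ?_
  rw [log_one_add_eq_sum_range_add_integral hx.le N]
  ring
end

section
/- ln 2 = ∑_{n=0}^{∞} (-1)^n c_n / (n+1)!. -/
open scoped BigOperators

/-!
For `x ∈ [0, 1]` the terms `(-1)^n x(x-1)⋯(x-n+1) / (n+1)! = (-1)^n binom(x, n) / (n+1)` are those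
of Newton's expansion of `∫₀¹ (1-t)^x dt = 1/(x+1)`. Multiplying the partial sums by `x + 1`
telescopes, leaving `1 + (-1)^N x(x-1)⋯(x-N) / (N+1)!`, and `|x(x-1)⋯(x-N)| ≤ N!` on `[0, 1]`,
so the partial sums converge to `1/(x+1)` uniformly on `[0, 1]` at rate `1/(N+1)`. Integrating
over `[0, 1]` turns them into the partial sums of the series and `1/(x+1)` into `log 2`.
The same bound gives `|c_{n+1}| ≤ n!`, so the series converges absolutely.
-/

open Finset Filter Topology intervalIntegral
open scoped Nat

def cauchyTerm {K : Type*} [Field K] (n : ℕ) (x : K) : K :=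
  (-1) ^ n * (∏ i ∈ range n, (x - i)) / (n + 1)!

theorem add_one_mul_sum_cauchyTerm {K : Type*} [Field K] [CharZero K] (N : ℕ) (x : K) :
    (x + 1) * ∑ n ∈ range (N + 1), cauchyTerm n x
      = 1 + (-1) ^ N * (∏ i ∈ range (N + 1), (x - i)) / (N + 1)! := by
  induction N with
  | zero => simp [cauchyTerm, add_comm]
  | succ N ih =>
    have hfac : ((N + 1)! : K) ≠ 0 := Nat.cast_ne_zero.mpr (Nat.factorial_ne_zero _)
    have hsucc : (N : K) + 1 + 1 ≠ 0 := by exact_mod_cast Nat.succ_ne_zero (N + 1)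
    rw [sum_range_succ, mul_add, ih, cauchyTerm, prod_range_succ _ (N + 1),
      Nat.factorial_succ (N + 1)]
    push_cast
    field_simp
    ring

theorem abs_prod_range_sub_le_factorial {x : ℝ} (hx : x ∈ Set.Icc 0 1) (n : ℕ) :
    |∏ i ∈ range (n + 1), (x - i)| ≤ n ! := by
  obtain ⟨hx0, hx1⟩ := hx
  induction n with
  | zero => simpa using abs_le.2 ⟨by linarith, hx1⟩
  | succ n ih =>
    have hlast : |x - (n + 1 : ℕ)| ≤ (n + 1 : ℕ) := by
      rw [abs_le]; push_cast; constructor <;> linarith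
    rw [prod_range_succ, abs_mul, Nat.factorial_succ, Nat.cast_mul, mul_comm ((n + 1 : ℕ) : ℝ)]
    exact mul_le_mul ih hlast (abs_nonneg _) (by positivity)

theorem abs_sum_cauchyTerm_sub_inv_le {x : ℝ} (hx : x ∈ Set.Icc 0 1) (N : ℕ) :
    |∑ n ∈ range (N + 1), cauchyTerm n x - (x + 1)⁻¹| ≤ 1 / (N + 1) := by
  have hx1 : 1 ≤ x + 1 := by linarith [hx.1]
  have hremainder : ∑ n ∈ range (N + 1), cauchyTerm n x - (x + 1)⁻¹
      = (-1) ^ N * (∏ i ∈ range (N + 1), (x - i)) / (N + 1)! / (x + 1) := by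
    rw [eq_div_iff (by positivity), sub_mul, mul_comm, add_one_mul_sum_cauchyTerm,
      inv_mul_cancel₀ (by positivity)]
    ring
  simp only [hremainder, abs_div, abs_mul, abs_pow, abs_neg, abs_one, one_pow, one_mul,
    Nat.abs_cast, abs_of_pos (by linarith : (0 : ℝ) < x + 1)]
  calc |∏ i ∈ range (N + 1), (x - i)| / (N + 1)! / (x + 1)
      ≤ |∏ i ∈ range (N + 1), (x - i)| / (N + 1)! := div_le_self (by positivity) hx1
    _ ≤ N ! / (N + 1)! := by gcongr; exact abs_prod_range_sub_le_factorial hx N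
    _ = 1 / (N + 1) := by
      rw [Nat.factorial_succ]; push_cast; field_simp

theorem continuous_cauchyTerm (n : ℕ) : Continuous (cauchyTerm n : ℝ → ℝ) := by
  unfold cauchyTerm; fun_prop

theorem integral_cauchyTerm (n : ℕ) :
    ∫ x in (0 : ℝ)..1, cauchyTerm n x = (-1) ^ n * cauchyC n / (n + 1)! := by
  simp only [cauchyTerm, integral_div, integral_const_mul, cauchyC]

theorem abs_cauchyC_succ_le (n : ℕ) : |cauchyC (n + 1)| ≤ n ! := by
  have h := norm_integral_le_of_norm_le_const (a := (0 : ℝ)) (b := 1)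
    (f := fun x => ∏ i ∈ range (n + 1), (x - i)) (C := n !) fun x hx =>
      abs_prod_range_sub_le_factorial
        (Set.Ioc_subset_Icc_self (Set.uIoc_of_le (zero_le_one (α := ℝ)) ▸ hx)) n
  simpa [cauchyC] using h

theorem summable_cauchy_series :
    Summable fun n : ℕ => (-1 : ℝ) ^ n * cauchyC n / (n + 1)! := by
  have hdom : Summable fun n : ℕ => (((n + 1 : ℕ) : ℝ) ^ 2)⁻¹ :=
    (summable_nat_add_iff 1).mpr (Real.summable_nat_pow_inv.mpr one_lt_two)
  refine (summable_nat_add_iff 1).mp (hdom.of_norm_bounded fun n => ?_)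
  rw [Real.norm_eq_abs, abs_div, abs_mul, abs_pow, abs_neg, abs_one, one_pow, one_mul,
    Nat.abs_cast, div_le_iff₀ (by positivity), Nat.factorial_succ, Nat.factorial_succ]
  calc |cauchyC (n + 1)| ≤ n ! := abs_cauchyC_succ_le n
    _ ≤ (((n + 1 : ℕ) : ℝ) ^ 2)⁻¹ * ((n + 1 + 1) * ((n + 1) * n ! : ℕ) : ℕ) := by
      push_cast
      rw [inv_mul_eq_div, le_div_iff₀ (by positivity)]
      nlinarith

theorem tendsto_sum_cauchy_series_log_two :
    Tendsto (fun N => ∑ n ∈ range (N + 1), (-1 : ℝ) ^ n * cauchyC n / (n + 1)!) atTop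
      (𝓝 (Real.log 2)) := by
  have hlog : ∫ x in (0 : ℝ)..1, (x + 1)⁻¹ = Real.log 2 := by
    rw [integral_comp_add_right (fun x => x⁻¹), integral_inv_of_pos] <;> norm_num
  have hpartial (N : ℕ) : ∑ n ∈ range (N + 1), (-1 : ℝ) ^ n * cauchyC n / (n + 1)!
      = ∫ x in (0 : ℝ)..1, ∑ n ∈ range (N + 1), cauchyTerm n x := by
    rw [integral_finsetSum fun n _ => (continuous_cauchyTerm n).intervalIntegrable _ _]
    simp only [integral_cauchyTerm]
  have hinv : IntervalIntegrable (fun x : ℝ => (x + 1)⁻¹) MeasureTheory.volume 0 1 :=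
    (ContinuousOn.inv₀ (by fun_prop) fun x hx => by
      rw [Set.uIcc_of_le zero_le_one] at hx; linarith [hx.1]).intervalIntegrable
  refine tendsto_iff_norm_sub_tendsto_zero.mpr <|
    squeeze_zero (fun _ => norm_nonneg _) (fun N => ?_) tendsto_one_div_add_atTop_nhds_zero_nat
  rw [hpartial, ← hlog, ← integral_sub ((continuous_finsetSum _ fun n _ =>
    continuous_cauchyTerm n).intervalIntegrable _ _) hinv]
  simpa using norm_integral_le_of_norm_le_const
    (f := fun x => ∑ n ∈ range (N + 1), cauchyTerm n x - (x + 1)⁻¹) fun x hx =>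
    abs_sum_cauchyTerm_sub_inv_le
      (Set.Ioc_subset_Icc_self (Set.uIoc_of_le (zero_le_one (α := ℝ)) ▸ hx)) N

theorem log_two_eq_cauchy_series :
    Real.log 2 = ∑' n : ℕ, (-1) ^ n * cauchyC n / (Nat.factorial (n + 1)) :=
  tendsto_nhds_unique tendsto_sum_cauchy_series_log_two
    (summable_cauchy_series.hasSum.tendsto_sum_nat.comp (tendsto_add_atTop_nat 1))
end

section
/- For every integer k ≥ 1, ζ(k+1) = ∑_{n=k}^{∞} (-1)^{n-k} s(n,k) / (n! · n), where ζ is the Riemann zeta function. -/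
open scoped BigOperators

noncomputable def stirlingS1 (n k : ℕ) : ℝ :=
  (∏ i ∈ Finset.range n, (Polynomial.X - Polynomial.C (i : ℝ))).coeff k

/-!
The unsigned Stirling numbers `c(n,k) = (-1)^(n+k) s(n,k)` have exponential generating function
`∑ₘ c(m,k) xᵐ / m! = (-log (1 - x))ᵏ / k!` on `(-1, 1)`: for `k ≥ 1` both sides vanish at `0`, and
the recurrence `c(m+1,k+1) = m c(m,k+1) + c(m,k)` says `(1 - x) F'ₖ₊₁ = Fₖ`. Writing
`1 / n = ∫₀¹ xⁿ⁻¹ dx`, the series becomes `∫₀¹ (-log (1 - x))ᵏ / (k! x) dx`. Expanding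
`1 / x = ∑ₘ (1 - x)ᵐ` and substituting `x = 1 - e⁻ᵗ` turns it into
`∑ₘ ∫₀^∞ tᵏ e^(-(m+1)t) / k! dt = ∑ₘ 1 / (m+1)ᵏ⁺¹ = ζ(k+1)`. All terms are nonnegative, so the
interchanges of sums and integrals are Tonelli in `ℝ≥0∞`.
-/

open Real Set MeasureTheory
open scoped Nat

theorem stirlingS1_eq_neg_one_pow_mul_stirlingFirst (n k : ℕ) :
    stirlingS1 n k = (-1) ^ (n + k) * n.stirlingFirst k := by
  induction n generalizing k with
  | zero => cases k <;> simp [stirlingS1, Polynomial.coeff_one]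
  | succ n ih =>
    rw [stirlingS1, Finset.prod_range_succ]
    cases k with
    | zero =>
      rw [Polynomial.mul_coeff_zero, ← stirlingS1, ih]
      rcases n with _ | n <;> simp
    | succ k =>
      rw [Polynomial.coeff_mul_X_sub_C, ← stirlingS1, ← stirlingS1, ih, ih,
        Nat.stirlingFirst_succ_succ]
      push_cast
      ring

theorem Nat.stirlingFirst_le_factorial (n k : ℕ) : n.stirlingFirst k ≤ n ! := by
  induction n generalizing k with
  | zero => cases k <;> simp
  | succ n ih =>
    cases k with
    | zero => simp
    | succ k =>
      rw [Nat.stirlingFirst_succ_succ, Nat.factorial_succ, Nat.succ_mul]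
      exact Nat.add_le_add (Nat.mul_le_mul_left n (ih _)) (ih k)

theorem summable_natCast_mul_pow_pred {r : ℝ} (hr : |r| < 1) :
    Summable (fun m : ℕ => m * r ^ (m - 1)) := by
  rw [← summable_nat_add_iff 1]
  simpa [add_mul] using (summable_pow_mul_geometric_of_norm_lt_one 1 hr).add
    (summable_geometric_of_norm_lt_one hr)

theorem hasDerivAt_tsum_mul_pow {a : ℕ → ℝ} {C : ℝ} (ha : ∀ m, |a m| ≤ C) {x : ℝ}
    (hx : |x| < 1) :
    HasDerivAt (fun y => ∑' m, a m * y ^ m) (∑' m, (m + 1) * a (m + 1) * x ^ m) x := by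
  obtain ⟨r, hxr, hr1⟩ := exists_between hx
  have hr0 : 0 < r := (abs_nonneg x).trans_lt hxr
  have hr : |r| < 1 := abs_lt.2 ⟨by linarith, hr1⟩
  have hbound : ∀ m, ∀ y ∈ Ioo (-r) r, ‖a m * (m * y ^ (m - 1))‖ ≤ C * (m * r ^ (m - 1)) := by
    intro m y hy
    rw [norm_mul, norm_mul, Real.norm_natCast, norm_pow, Real.norm_eq_abs]
    have hyr : ‖y‖ ≤ r := abs_le.2 ⟨hy.1.le, hy.2.le⟩
    gcongr
    · exact (abs_nonneg _).trans (ha 0)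
    · exact ha m
  have hu := (summable_natCast_mul_pow_pred hr).mul_left C
  have hderiv := hasDerivAt_tsum_of_isPreconnected hu isOpen_Ioo isPreconnected_Ioo
    (g := fun m y => a m * y ^ m) (g' := fun m y => a m * (m * y ^ (m - 1)))
    (fun m y _ => (hasDerivAt_pow m y).const_mul (a m)) hbound
    (y₀ := 0) ⟨neg_neg_of_pos hr0, hr0⟩
    (summable_of_ne_finset_zero (s := {0}) (by intro m hm; simp_all)) (abs_lt.1 hxr)
  rw [(hu.of_norm_bounded (hbound · x (abs_lt.1 hxr))).tsum_eq_zero_add] at hderiv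
  refine hderiv.congr_deriv ?_
  simp only [CharP.cast_eq_zero, zero_mul, mul_zero, zero_add, Nat.cast_add, Nat.cast_one,
    Nat.add_sub_cancel]
  exact tsum_congr fun m => by ring

theorem summable_natCast_mul_mul_pow {a : ℕ → ℝ} {C : ℝ} (ha : ∀ m, |a m| ≤ C) {x : ℝ}
    (hx : |x| < 1) : Summable (fun m : ℕ => m * a m * x ^ m) := by
  refine .of_norm_bounded
    ((summable_pow_mul_geometric_of_norm_lt_one 1 (r := |x|) (by simpa using hx)).mul_left C)
    fun m => ?_
  simp only [norm_mul, norm_pow, Real.norm_eq_abs, Nat.abs_cast, pow_one]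
  rw [mul_right_comm, mul_comm C]
  gcongr
  exact ha m

theorem tsum_natCast_mul_mul_pow {a : ℕ → ℝ} {C : ℝ} (ha : ∀ m, |a m| ≤ C) {x : ℝ}
    (hx : |x| < 1) :
    ∑' m : ℕ, m * a m * x ^ m = x * ∑' m : ℕ, (m + 1) * a (m + 1) * x ^ m := by
  rw [(summable_natCast_mul_mul_pow ha hx).tsum_eq_zero_add, ← tsum_mul_left]
  simp only [CharP.cast_eq_zero, zero_mul, zero_add, Nat.cast_add, Nat.cast_one, pow_succ]
  exact tsum_congr fun m => by ring

noncomputable def stirlingFirstEGF (k : ℕ) (x : ℝ) : ℝ :=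
  ∑' m : ℕ, (m.stirlingFirst k / m ! : ℝ) * x ^ m

theorem abs_stirlingFirst_div_factorial_le_one (k m : ℕ) :
    |(m.stirlingFirst k / m ! : ℝ)| ≤ 1 := by
  rw [abs_of_nonneg (by positivity), div_le_one (by positivity)]
  exact_mod_cast m.stirlingFirst_le_factorial k

theorem summable_stirlingFirst_div_factorial_mul_pow (k : ℕ) {x : ℝ} (hx : |x| < 1) :
    Summable (fun m : ℕ => (m.stirlingFirst k / m ! : ℝ) * x ^ m) :=
  .of_norm_bounded (summable_geometric_of_lt_one (abs_nonneg x) hx) fun m => by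
    rw [norm_mul, norm_pow, Real.norm_eq_abs, Real.norm_eq_abs]
    exact mul_le_of_le_one_left (by positivity) (abs_stirlingFirst_div_factorial_le_one k m)

theorem succ_mul_stirlingFirst_succ_div_factorial (k m : ℕ) :
    (m + 1 : ℝ) * ((m + 1).stirlingFirst (k + 1) / (m + 1)!) =
      m * (m.stirlingFirst (k + 1) / m !) + m.stirlingFirst k / m ! := by
  rw [Nat.stirlingFirst_succ_succ, Nat.factorial_succ]
  push_cast
  field_simp

theorem hasDerivAt_stirlingFirstEGF_succ (k : ℕ) {x : ℝ} (hx : |x| < 1) :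
    HasDerivAt (stirlingFirstEGF (k + 1)) (stirlingFirstEGF k x / (1 - x)) x := by
  have hbound := (abs_stirlingFirst_div_factorial_le_one (k + 1) ·)
  have hderiv := hasDerivAt_tsum_mul_pow hbound hx
  set D := ∑' m : ℕ, (m + 1) * ((m + 1).stirlingFirst (k + 1) / (m + 1)! : ℝ) * x ^ m
  have hD : D = stirlingFirstEGF k x + x * D := calc
    D = ∑' m : ℕ, ((m.stirlingFirst k / m ! : ℝ) * x ^ m +
        m * (m.stirlingFirst (k + 1) / m ! : ℝ) * x ^ m) :=
      tsum_congr fun m => by rw [succ_mul_stirlingFirst_succ_div_factorial]; ring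
    _ = stirlingFirstEGF k x + x * D := by
      rw [(summable_stirlingFirst_div_factorial_mul_pow k hx).tsum_add
        (summable_natCast_mul_mul_pow hbound hx), tsum_natCast_mul_mul_pow hbound hx]
      rfl
  refine hderiv.congr_deriv ?_
  have : 1 - x ≠ 0 := by linarith [le_abs_self x]
  field_simp
  linarith

theorem stirlingFirstEGF_zero_left (x : ℝ) : stirlingFirstEGF 0 x = 1 := by
  rw [stirlingFirstEGF, tsum_eq_single 0 fun m hm => ?_]
  · simp
  · obtain ⟨m, rfl⟩ := Nat.exists_eq_succ_of_ne_zero hm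
    simp

theorem stirlingFirstEGF_succ_zero (k : ℕ) : stirlingFirstEGF (k + 1) 0 = 0 := by
  rw [stirlingFirstEGF, tsum_eq_single 0 fun m hm => by simp [hm]]
  simp

theorem hasDerivAt_neg_log_one_sub_pow_div_factorial (k : ℕ) {x : ℝ} (hx : x < 1) :
    HasDerivAt (fun y => (-log (1 - y)) ^ (k + 1) / (k + 1)!)
      ((-log (1 - x)) ^ k / k ! / (1 - x)) x := by
  have hlog : HasDerivAt (fun y => -log (1 - y)) (1 - x)⁻¹ x := by
    refine (((hasDerivAt_id x).const_sub 1).log (sub_pos.2 hx).ne').fun_neg.congr_deriv ?_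
    simp [neg_div]
  refine ((hlog.pow (k + 1)).div_const _).congr_deriv ?_
  rw [Nat.factorial_succ]
  push_cast
  field_simp

theorem stirlingFirstEGF_eqOn (k : ℕ) :
    EqOn (stirlingFirstEGF k) (fun x => (-log (1 - x)) ^ k / k !) (Ioo (-1) 1) := by
  induction k with
  | zero => intro x _; simp [stirlingFirstEGF_zero_left]
  | succ k ih =>
    have hF : ∀ x ∈ Ioo (-1 : ℝ) 1, HasDerivAt (stirlingFirstEGF (k + 1))
        ((-log (1 - x)) ^ k / k ! / (1 - x)) x := fun x hx =>
      (hasDerivAt_stirlingFirstEGF_succ k (abs_lt.2 hx)).congr_deriv (by rw [ih hx])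
    have hG := fun x (hx : x ∈ Ioo (-1 : ℝ) 1) =>
      hasDerivAt_neg_log_one_sub_pow_div_factorial k hx.2
    refine isOpen_Ioo.eqOn_of_deriv_eq isPreconnected_Ioo
      (fun x hx => (hF x hx).differentiableAt.differentiableWithinAt)
      (fun x hx => (hG x hx).differentiableAt.differentiableWithinAt)
      (fun x hx => (hF x hx).deriv.trans (hG x hx).deriv.symm) (x := 0) (by norm_num) ?_
    simp [stirlingFirstEGF_succ_zero]

theorem lintegral_Ioo_mul_pow {c : ℝ} (hc : 0 ≤ c) (n : ℕ) :
    ∫⁻ x in Ioo (0 : ℝ) 1, ENNReal.ofReal (c * x ^ n) = ENNReal.ofReal (c / (n + 1)) := by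
  have hint : IntegrableOn (fun x : ℝ => c * x ^ n) (Ioo 0 1) :=
    (continuous_const.mul (continuous_pow n)).integrableOn_Icc.mono_set Ioo_subset_Icc_self
  rw [← ofReal_integral_eq_lintegral_ofReal hint
    ((ae_restrict_iff' measurableSet_Ioo).2 (.of_forall fun x hx => by have := hx.1; positivity)),
    ← integral_Ioc_eq_integral_Ioo, ← intervalIntegral.integral_of_le zero_le_one,
    intervalIntegral.integral_const_mul, integral_pow]
  simp [div_eq_mul_inv]

theorem lintegral_Ioi_pow_div_factorial_mul_exp_neg_mul (k : ℕ) {r : ℝ} (hr : 0 < r) :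
    ∫⁻ t in Ioi 0, ENNReal.ofReal (t ^ k / k ! * exp (-(r * t))) =
      ENNReal.ofReal (1 / r ^ (k + 1)) := by
  have hint : IntegrableOn (fun t : ℝ => t ^ k / k ! * exp (-(r * t))) (Ioi 0) := by
    refine IntegrableOn.congr_fun (Integrable.div_const (integrableOn_rpow_mul_exp_neg_mul_rpow
      (s := k) (p := 1) (by linarith [k.cast_nonneg (α := ℝ)]) one_pos hr) (k ! : ℝ))
      (fun t _ => ?_) measurableSet_Ioi
    simp [Real.rpow_natCast, div_mul_eq_mul_div]
  rw [← ofReal_integral_eq_lintegral_ofReal hint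
    ((ae_restrict_iff' measurableSet_Ioi).2 (.of_forall fun t ht => by have := ht.out; positivity))]
  have := integral_rpow_mul_exp_neg_mul_Ioi (a := k + 1) (by positivity) hr
  simp only [add_sub_cancel_right, Real.rpow_natCast] at this
  simp_rw [div_mul_eq_mul_div, integral_div, this, Real.Gamma_nat_eq_factorial,
    ← Nat.cast_add_one, Real.rpow_natCast]
  rw [one_div_pow, mul_div_cancel_right₀ _ (by positivity)]

theorem image_one_sub_exp_neg_Ioi : (fun t : ℝ => 1 - exp (-t)) '' Ioi 0 = Ioo 0 1 := by
  ext y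
  constructor
  · rintro ⟨t, ht, rfl⟩
    have := exp_lt_one_iff.2 (neg_neg_of_pos ht.out)
    have := exp_pos (-t)
    constructor <;> dsimp only <;> linarith
  · intro hy
    refine ⟨-log (1 - y), ?_, ?_⟩
    · simpa using log_neg (by linarith [hy.2]) (by linarith [hy.1])
    · simp [exp_log (by linarith [hy.2] : 0 < 1 - y)]

theorem lintegral_Ioo_neg_log_one_sub_pow_div_factorial_mul_one_sub_pow (k m : ℕ) :
    ∫⁻ x in Ioo (0 : ℝ) 1, ENNReal.ofReal ((-log (1 - x)) ^ k / k ! * (1 - x) ^ m) =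
      ENNReal.ofReal (1 / (m + 1) ^ (k + 1)) := by
  have hderiv : ∀ t ∈ Ioi (0 : ℝ),
      HasDerivWithinAt (fun t => 1 - exp (-t)) (exp (-t)) (Ioi 0) t := fun t _ => by
    simpa using ((hasDerivAt_neg t).exp.const_sub 1).hasDerivWithinAt
  have hinj : InjOn (fun t : ℝ => 1 - exp (-t)) (Ioi 0) := fun a _ b _ h => by simpa using h
  rw [← image_one_sub_exp_neg_Ioi,
    lintegral_image_eq_lintegral_abs_deriv_mul measurableSet_Ioi hderiv hinj,
    ← lintegral_Ioi_pow_div_factorial_mul_exp_neg_mul k (by positivity : (0 : ℝ) < m + 1)]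
  refine setLIntegral_congr_fun measurableSet_Ioi fun t _ => ?_
  rw [← ENNReal.ofReal_mul (abs_nonneg _), abs_of_pos (exp_pos _)]
  congr 1
  rw [sub_sub_cancel, log_exp, neg_neg, ← exp_nat_mul, mul_left_comm, ← exp_add]
  ring_nf

theorem ofReal_div_eq_tsum_ofReal_mul_one_sub_pow {c x : ℝ} (hc : 0 ≤ c) (hx : x ∈ Ioo 0 1) :
    ENNReal.ofReal (c / x) = ∑' m : ℕ, ENNReal.ofReal (c * (1 - x) ^ m) := by
  have h0 : 0 ≤ 1 - x := by linarith [hx.2]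
  have h1 : 1 - x < 1 := by linarith [hx.1]
  rw [← ENNReal.ofReal_tsum_of_nonneg (fun m => by positivity)
    ((summable_geometric_of_lt_one h0 h1).mul_left c), tsum_mul_left,
    tsum_geometric_of_lt_one h0 h1, sub_sub_cancel, div_eq_mul_inv]

theorem hasSum_stirlingFirst_div_factorial_mul_pow (k : ℕ) {x : ℝ} (hx : x ∈ Ioo 0 1) :
    HasSum (fun n : ℕ => ((n + k + 1).stirlingFirst (k + 1) / (n + k + 1)! : ℝ) * x ^ (n + k))
      ((-log (1 - x)) ^ (k + 1) / (k + 1)! / x) := by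
  have habs : |x| < 1 := abs_lt.2 ⟨by linarith [hx.1], hx.2⟩
  have hegf := (summable_stirlingFirst_div_factorial_mul_pow (k + 1) habs).hasSum
  rw [← hasSum_nat_add_iff' (k + 1), Finset.sum_eq_zero fun i hi => by
    simp [Nat.stirlingFirst_eq_zero_of_lt (Finset.mem_range.1 hi)], sub_zero] at hegf
  have hF : stirlingFirstEGF (k + 1) x = (-log (1 - x)) ^ (k + 1) / (k + 1)! :=
    stirlingFirstEGF_eqOn (k + 1) (abs_lt.1 habs)
  rw [← hF]
  refine (hegf.div_const x).congr_fun fun n => ?_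
  rw [← add_assoc, pow_succ]
  field_simp [hx.1.ne']

theorem tsum_ofReal_stirlingFirst_div_eq_tsum_ofReal_one_div_pow (k : ℕ) :
    ∑' n : ℕ, ENNReal.ofReal
        ((n + k + 1).stirlingFirst (k + 1) / ((n + k + 1)! * (n + k + 1 : ℕ)) : ℝ) =
      ∑' m : ℕ, ENNReal.ofReal (1 / (m + 1) ^ (k + 2)) := by
  set L : ℝ → ℝ := fun x => (-log (1 - x)) ^ (k + 1) / (k + 1)!
  have hL : ∀ x ∈ Ioo (0 : ℝ) 1, 0 ≤ L x := fun x hx => by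
    have : 0 ≤ -log (1 - x) := neg_nonneg.2 (log_nonpos (by linarith [hx.2]) (by linarith [hx.1]))
    positivity
  calc _ = ∑' n : ℕ, ∫⁻ x in Ioo (0 : ℝ) 1, ENNReal.ofReal
          (((n + k + 1).stirlingFirst (k + 1) / (n + k + 1)! : ℝ) * x ^ (n + k)) := by
        congr! 2 with n
        rw [lintegral_Ioo_mul_pow (by positivity), div_div]
        push_cast
        ring_nf
    _ = ∫⁻ x in Ioo (0 : ℝ) 1, ∑' n : ℕ, ENNReal.ofReal
          (((n + k + 1).stirlingFirst (k + 1) / (n + k + 1)! : ℝ) * x ^ (n + k)) :=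
        (lintegral_tsum fun n => by fun_prop).symm
    _ = ∫⁻ x in Ioo (0 : ℝ) 1, ENNReal.ofReal (L x / x) :=
        setLIntegral_congr_fun measurableSet_Ioo fun x hx => by
          rw [← ENNReal.ofReal_tsum_of_nonneg (fun n => by have := hx.1; positivity)
            (hasSum_stirlingFirst_div_factorial_mul_pow k hx).summable,
            (hasSum_stirlingFirst_div_factorial_mul_pow k hx).tsum_eq]
    _ = ∫⁻ x in Ioo (0 : ℝ) 1, ∑' m : ℕ, ENNReal.ofReal (L x * (1 - x) ^ m) :=
        setLIntegral_congr_fun measurableSet_Ioo fun x hx =>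
          ofReal_div_eq_tsum_ofReal_mul_one_sub_pow (hL x hx) hx
    _ = ∑' m : ℕ, ∫⁻ x in Ioo (0 : ℝ) 1, ENNReal.ofReal (L x * (1 - x) ^ m) :=
        lintegral_tsum fun m => by fun_prop
    _ = _ := tsum_congr fun m =>
        lintegral_Ioo_neg_log_one_sub_pow_div_factorial_mul_one_sub_pow (k + 1) m

theorem tsum_eq_tsum_of_tsum_ofReal_eq {ι κ : Type*} {f : ι → ℝ} {g : κ → ℝ}
    (hf : ∀ i, 0 ≤ f i) (hg : ∀ j, 0 ≤ g j)
    (h : ∑' i, ENNReal.ofReal (f i) = ∑' j, ENNReal.ofReal (g j)) :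
    ∑' i, f i = ∑' j, g j := by
  have := congrArg ENNReal.toReal h
  rwa [ENNReal.tsum_toReal_eq (fun _ => ENNReal.ofReal_ne_top),
    ENNReal.tsum_toReal_eq (fun _ => ENNReal.ofReal_ne_top),
    tsum_congr (fun i => ENNReal.toReal_ofReal (hf i)),
    tsum_congr (fun j => ENNReal.toReal_ofReal (hg j))] at this

theorem zeta_eq_stirling_series (k : ℕ) (hk : 1 ≤ k) :
    riemannZeta ((k : ℂ) + 1) =
      ((∑' n : ℕ, (-1) ^ n * stirlingS1 (n + k) k /
        ((Nat.factorial (n + k)) * (n + k)) : ℝ) : ℂ) := by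
  obtain ⟨k, rfl⟩ := Nat.exists_eq_add_of_le' hk
  have hterm (n : ℕ) : (-1) ^ n * stirlingS1 (n + (k + 1)) (k + 1) /
      ((n + (k + 1))! * ((n : ℝ) + (k + 1 : ℕ))) =
      (n + k + 1).stirlingFirst (k + 1) / ((n + k + 1)! * (n + k + 1 : ℕ)) := by
    rw [stirlingS1_eq_neg_one_pow_mul_stirlingFirst, ← mul_assoc, ← pow_add,
      Even.neg_one_pow ⟨n + (k + 1), by ring⟩, one_mul, ← add_assoc]
    push_cast
    ring
  rw [tsum_congr hterm, tsum_eq_tsum_of_tsum_ofReal_eq (fun n => by positivity)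
    (fun m => by positivity) (tsum_ofReal_stirlingFirst_div_eq_tsum_ofReal_one_div_pow k),
    Complex.ofReal_tsum, zeta_eq_tsum_one_div_nat_add_one_cpow (by simpa using k.cast_add_one_pos (α := ℝ))]
  push_cast
  norm_cast
end
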